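/- arXiv:2401.04622 — 3 statements merged into one kernel-verified Lean document; each statement's English description precedes it below -/
import Mathlib

section
/- Let ℓ ≥ 2 be an integer and let a, ρ > 0 satisfy J_{ℓ−1}(aρ) = 0 and J_ℓ(aρ) ≠ 0. Define f : (0,∞) → ℝ by f(r) = J_ℓ(ar)/J_ℓ(aρ) for 0 < r ≤ ρ and f(r) = (ρ/r)^ℓ for r > ρ. Then f is continuously differentiable on (0,∞); f is twice differentiable on (0,ρ) and on (ρ,∞), where it satisfies f″(r) + f′(r)/r + (a²·𝟙_{r<ρ} − ℓ²/r²)·f(r) = 0; and ∫₀^∞ f(r)²·r dr < ∞. (Thus (r,θ) ↦ f(r)e^{iℓθ} is a zero-energy eigenfunction of −Δ − a²·𝟙_{|x|≤ρ} on ℝ².) -/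
open scoped Real Topology
open Filter Asymptotics

noncomputable def eulerGamma : ℝ := -deriv Real.Gamma 1

noncomputable def harm (m : ℕ) : ℝ := ∑ j ∈ Finset.range m, (1 : ℝ)/(j+1)

noncomputable def besselJr (ℓ : ℕ) (x : ℝ) : ℝ :=
  ∑' k : ℕ, ((-1 : ℝ)^k / ((Nat.factorial k : ℝ) * (Nat.factorial (k + ℓ) : ℝ))) * (x/2)^(2*k + ℓ)

noncomputable def besselYr (ℓ : ℕ) (x : ℝ) : ℝ :=
  (2/Real.pi) * (Real.log (x/2) + eulerGamma) * besselJr ℓ x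
  - (1/Real.pi) * ∑ k ∈ Finset.range ℓ,
      ((Nat.factorial (ℓ - k - 1) : ℝ) / (Nat.factorial k : ℝ)) * (x/2)^(2*(k:ℤ) - (ℓ:ℤ))
  - (1/Real.pi) * ∑' k : ℕ,
      ((-1:ℝ)^k * (harm k + harm (k+ℓ)) / ((Nat.factorial k : ℝ) * (Nat.factorial (k+ℓ) : ℝ))) * (x/2)^(2*k+ℓ)

noncomputable def besselJn (ℓ : ℕ) (z : ℂ) : ℂ :=
  ∑' k : ℕ, ((-1 : ℂ)^k / ((Nat.factorial k : ℂ) * (Nat.factorial (k + ℓ) : ℂ))) * (z/2)^(2*k + ℓ)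

noncomputable def besselJZ (ℓ : ℤ) (z : ℂ) : ℂ :=
  if 0 ≤ ℓ then besselJn ℓ.toNat z else (-1 : ℂ)^((-ℓ).toNat) * besselJn (-ℓ).toNat z

noncomputable def besselYn (ℓ : ℕ) (z : ℂ) : ℂ :=
  (2/(Real.pi : ℂ)) * (Complex.log (z/2) + (eulerGamma : ℂ)) * besselJn ℓ z
  - (1/(Real.pi : ℂ)) * ∑ k ∈ Finset.range ℓ,
      ((Nat.factorial (ℓ - k - 1) : ℂ) / (Nat.factorial k : ℂ)) * (z/2)^(2*(k:ℤ) - (ℓ:ℤ))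
  - (1/(Real.pi : ℂ)) * ∑' k : ℕ,
      ((-1:ℂ)^k * ((harm k : ℝ) + (harm (k+ℓ) : ℝ)) / ((Nat.factorial k : ℂ) * (Nat.factorial (k+ℓ) : ℂ))) * (z/2)^(2*k+ℓ)

noncomputable def besselYZ (ℓ : ℤ) (z : ℂ) : ℂ :=
  if 0 ≤ ℓ then besselYn ℓ.toNat z else (-1 : ℂ)^((-ℓ).toNat) * besselYn (-ℓ).toNat z

noncomputable def hankelH1 (ℓ : ℤ) (z : ℂ) : ℂ := besselJZ ℓ z + Complex.I * besselYZ ℓ z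

noncomputable def hankelH1n (ℓ : ℕ) (z : ℂ) : ℂ := besselJn ℓ z + Complex.I * besselYn ℓ z
noncomputable def hankelH2n (ℓ : ℕ) (z : ℂ) : ℂ := besselJn ℓ z - Complex.I * besselYn ℓ z

noncomputable def muC (a : ℝ) (lam : ℂ) : ℂ := (lam^2 + (a:ℂ)^2) ^ ((1:ℂ)/2)

noncomputable def Qfun (ρ : ℝ) (ℓ : ℤ) (lam : ℂ) (a : ℝ) : ℂ :=
  muC a lam * besselJZ (ℓ-1) ((ρ:ℂ) * muC a lam) * hankelH1 ℓ (lam * (ρ:ℂ))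
  - lam * besselJZ ℓ ((ρ:ℂ) * muC a lam) * hankelH1 (ℓ-1) (lam * (ρ:ℂ))

noncomputable def Dfun (a ρ : ℝ) (ℓ : ℕ) (lam : ℝ) : ℝ :=
  (Real.sqrt (lam^2+a^2) * besselJr (ℓ-1) (Real.sqrt (lam^2+a^2)*ρ) * besselJr ℓ (lam*ρ)
    - lam * besselJr ℓ (Real.sqrt (lam^2+a^2)*ρ) * besselJr (ℓ-1) (lam*ρ))^2
  + (Real.sqrt (lam^2+a^2) * besselJr (ℓ-1) (Real.sqrt (lam^2+a^2)*ρ) * besselYr ℓ (lam*ρ)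
    - lam * besselJr ℓ (Real.sqrt (lam^2+a^2)*ρ) * besselYr (ℓ-1) (lam*ρ))^2

noncomputable def Ffun (a ρ : ℝ) (ℓ : ℕ) (lam : ℝ) : ℝ :=
  (2*a^2/(Real.pi^2*lam)) * besselJr (ℓ-1) (Real.sqrt (lam^2+a^2)*ρ)
    * besselJr (ℓ+1) (Real.sqrt (lam^2+a^2)*ρ) / Dfun a ρ ℓ lam

noncomputable def D0fun (a ρ : ℝ) (lam : ℝ) : ℝ :=
  (Real.sqrt (lam^2+a^2) * besselJr 1 (Real.sqrt (lam^2+a^2)*ρ) * besselJr 0 (lam*ρ)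
    - lam * besselJr 0 (Real.sqrt (lam^2+a^2)*ρ) * besselJr 1 (lam*ρ))^2
  + (Real.sqrt (lam^2+a^2) * besselJr 1 (Real.sqrt (lam^2+a^2)*ρ) * besselYr 0 (lam*ρ)
    - lam * besselJr 0 (Real.sqrt (lam^2+a^2)*ρ) * besselYr 1 (lam*ρ))^2

noncomputable def F0fun (a ρ : ℝ) (lam : ℝ) : ℝ :=
  -(2*a^2/(Real.pi^2*lam)) * (besselJr 1 (Real.sqrt (lam^2+a^2)*ρ))^2 / D0fun a ρ lam


/-!
Inside the well, `r ↦ J_ℓ(a r)` solves the scaled Bessel equation; Bessel's equation itself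
follows from the two recurrences `J_ℓ' = J_{ℓ-1} - (ℓ/x) J_ℓ = (ℓ/x) J_ℓ - J_{ℓ+1}`, obtained by
differentiating the power series termwise. Outside, `(ρ/r)^ℓ` solves the Euler equation
`r² f'' + r f' - ℓ² f = 0`. Both pieces equal `1` at `ρ`, and the first recurrence turns
`J_{ℓ-1}(aρ) = 0` into `J_ℓ'(aρ) / J_ℓ(aρ) = -ℓ/(aρ)`, so both have derivative `-ℓ/ρ` there and
`f` is `C¹`. Beyond `ρ`, `f² r = ρ^{2ℓ} r^{1-2ℓ}` is integrable because `ℓ ≥ 2`.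
-/

open Set MeasureTheory

namespace BesselJr

open scoped Nat

noncomputable def term (ℓ k : ℕ) (x : ℝ) : ℝ :=
  (-1) ^ k / (k ! * (k + ℓ)! : ℝ) * (x / 2) ^ (2 * k + ℓ)

-- At `k = ℓ = 0` the exponent `2 * k + ℓ - 1` truncates to `0`; harmless, as the factor
-- `2 * k + ℓ` vanishes there.
noncomputable def termDeriv (ℓ k : ℕ) (x : ℝ) : ℝ :=
  (-1) ^ k / (k ! * (k + ℓ)! : ℝ) * (2 * k + ℓ : ℕ) * (x / 2) ^ (2 * k + ℓ - 1) / 2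

theorem besselJr_eq_tsum (ℓ : ℕ) (x : ℝ) : besselJr ℓ x = ∑' k, term ℓ k x := rfl

theorem hasDerivAt_term (ℓ k : ℕ) (x : ℝ) : HasDerivAt (term ℓ k) (termDeriv ℓ k x) x := by
  refine (((hasDerivAt_pow (2 * k + ℓ) (x / 2)).comp x
    ((hasDerivAt_id x).div_const 2)).const_mul ((-1 : ℝ) ^ k / (k ! * (k + ℓ)! : ℝ))).congr_deriv ?_
  rw [termDeriv]
  ring

theorem norm_term_le (ℓ k : ℕ) (x : ℝ) :
    ‖term ℓ k x‖ ≤ |x / 2| ^ ℓ * (|x / 2| ^ 2) ^ k / k ! := by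
  have hnorm : ‖term ℓ k x‖ = |x / 2| ^ (2 * k + ℓ) / (k ! * (k + ℓ)!) := by
    simp [term, abs_div]
    ring
  have hfac : (1 : ℝ) ≤ (k + ℓ)! := by exact_mod_cast (k + ℓ).factorial_pos
  rw [hnorm, ← pow_mul, ← pow_add, add_comm ℓ]
  gcongr
  exact le_mul_of_one_le_right (by positivity) hfac

theorem norm_termDeriv_le (ℓ k : ℕ) {x M : ℝ} (hM : 1 ≤ M) (hx : |x / 2| ≤ M) :
    ‖termDeriv ℓ k x‖ ≤ (2 * M) ^ ℓ * ((2 * M) ^ 2) ^ k / k ! := by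
  have hnorm : ‖termDeriv ℓ k x‖
      = (2 * k + ℓ : ℕ) * |x / 2| ^ (2 * k + ℓ - 1) / (k ! * ((k + ℓ)! * 2)) := by
    simp [termDeriv, abs_div, -Nat.cast_add, -Nat.cast_mul, -Nat.cast_ofNat]
    ring
  have hfac : (1 : ℝ) ≤ (k + ℓ)! * 2 := by
    have : (1 : ℝ) ≤ (k + ℓ)! := by exact_mod_cast (k + ℓ).factorial_pos
    linarith
  have hpow : |x / 2| ^ (2 * k + ℓ - 1) ≤ M ^ (2 * k + ℓ) :=
    (pow_le_pow_left₀ (abs_nonneg _) hx _).trans (pow_le_pow_right₀ hM (Nat.sub_le _ 1))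
  have hn : ((2 * k + ℓ : ℕ) : ℝ) ≤ 2 ^ (2 * k + ℓ) := by exact_mod_cast Nat.lt_two_pow_self.le
  calc ‖termDeriv ℓ k x‖ ≤ 2 ^ (2 * k + ℓ) * M ^ (2 * k + ℓ) / (k ! * 1) := by
        rw [hnorm]
        gcongr
    _ = (2 * M) ^ ℓ * ((2 * M) ^ 2) ^ k / k ! := by
        rw [mul_one, ← mul_pow, ← pow_mul, ← pow_add, add_comm]

theorem summable_term (ℓ : ℕ) (x : ℝ) : Summable (term ℓ · x) :=
  .of_norm_bounded ((Real.summable_pow_div_factorial _).mul_left (|x / 2| ^ ℓ))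
    fun k => (norm_term_le ℓ k x).trans_eq (mul_div_assoc _ _ _)

theorem summable_termDeriv (ℓ : ℕ) (x : ℝ) : Summable (termDeriv ℓ · x) :=
  .of_norm_bounded ((Real.summable_pow_div_factorial _).mul_left ((2 * max |x / 2| 1) ^ ℓ))
    fun k => (norm_termDeriv_le ℓ k (le_max_right _ _) (le_max_left _ _)).trans_eq
      (mul_div_assoc _ _ _)

theorem termDeriv_zero (ℓ : ℕ) {x : ℝ} (hx : x ≠ 0) : termDeriv ℓ 0 x = ℓ / x * term ℓ 0 x := by
  cases ℓ with
  | zero => simp [termDeriv, term]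
  | succ n =>
    simp only [termDeriv, term, Nat.mul_zero, Nat.zero_add, Nat.add_sub_cancel, pow_succ]
    field_simp

theorem termDeriv_succ (ℓ k : ℕ) {x : ℝ} (hx : x ≠ 0) :
    termDeriv ℓ (k + 1) x = ℓ / x * term ℓ (k + 1) x - term (ℓ + 1) k x := by
  have hfac : ((k + 1 + ℓ)! : ℝ) = (k + (ℓ + 1))! := by rw [add_right_comm, add_assoc]
  simp only [termDeriv, term, hfac, Nat.factorial_succ, show 2 * (k + 1) + ℓ =
    2 * k + (ℓ + 1) + 1 by ring, pow_succ]
  push_cast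
  field_simp
  ring

theorem termDeriv_order_succ (m k : ℕ) {x : ℝ} (hx : x ≠ 0) :
    termDeriv (m + 1) k x = term m k x - (m + 1) / x * term (m + 1) k x := by
  have hfac : ((k + (m + 1))! : ℝ) = (k + m + 1) * (k + m)! := by
    rw [← add_assoc, Nat.factorial_succ]; push_cast; ring
  simp only [termDeriv, term, hfac, show 2 * k + (m + 1) = 2 * k + m + 1 by ring, pow_succ]
  push_cast
  field_simp
  ring

end BesselJr

open BesselJr

theorem hasDerivAt_besselJr (ℓ : ℕ) (x : ℝ) :
    HasDerivAt (besselJr ℓ) (∑' k, termDeriv ℓ k x) x := by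
  set R := |x| + 1
  have hR : ∀ y ∈ Metric.ball (0 : ℝ) R, |y / 2| ≤ max (R / 2) 1 := fun y hy => by
    rw [mem_ball_zero_iff, Real.norm_eq_abs] at hy
    rw [abs_div, abs_two]
    exact le_max_of_le_left (by linarith)
  exact hasDerivAt_tsum_of_isPreconnected
    ((Real.summable_pow_div_factorial _).mul_left ((2 * max (R / 2) 1) ^ ℓ))
    Metric.isOpen_ball (convex_ball 0 R).isPreconnected (fun k y _ => hasDerivAt_term ℓ k y)
    (fun k y hy => (norm_termDeriv_le ℓ k (le_max_right _ _) (hR y hy)).trans_eq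
      (mul_div_assoc _ _ _))
    (Metric.mem_ball_self (by positivity)) (summable_term ℓ 0)
    (by rw [mem_ball_zero_iff, Real.norm_eq_abs]; linarith)

theorem differentiable_besselJr (ℓ : ℕ) : Differentiable ℝ (besselJr ℓ) :=
  fun x => (hasDerivAt_besselJr ℓ x).differentiableAt

theorem deriv_besselJr_succ (m : ℕ) {x : ℝ} (hx : x ≠ 0) :
    deriv (besselJr (m + 1)) x = besselJr m x - (m + 1) / x * besselJr (m + 1) x := by
  rw [(hasDerivAt_besselJr _ x).deriv, besselJr_eq_tsum, besselJr_eq_tsum, ← tsum_mul_left,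
    ← (summable_term m x).tsum_sub ((summable_term (m + 1) x).mul_left _)]
  exact tsum_congr fun k => termDeriv_order_succ m k hx

theorem deriv_besselJr (ℓ : ℕ) {x : ℝ} (hx : x ≠ 0) :
    deriv (besselJr ℓ) x = ℓ / x * besselJr ℓ x - besselJr (ℓ + 1) x := by
  rw [(hasDerivAt_besselJr _ x).deriv, besselJr_eq_tsum, besselJr_eq_tsum, ← tsum_mul_left,
    (summable_termDeriv ℓ x).tsum_eq_zero_add, ((summable_term ℓ x).mul_left _).tsum_eq_zero_add,
    tsum_congr fun k => termDeriv_succ ℓ k hx,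
    (((summable_nat_add_iff 1).2 (summable_term ℓ x)).mul_left _).tsum_sub
      (summable_term (ℓ + 1) x), termDeriv_zero ℓ hx]
  ring

def SolvesRadialAt (f : ℝ → ℝ) (V r : ℝ) : Prop :=
  DifferentiableAt ℝ f r ∧ DifferentiableAt ℝ (deriv f) r ∧
    deriv (deriv f) r + deriv f r / r + V * f r = 0

namespace SolvesRadialAt

variable {f g : ℝ → ℝ} {V r : ℝ}

theorem of_hasDerivAt {f' : ℝ → ℝ} {f'' : ℝ} (hf : ∀ᶠ y in 𝓝 r, HasDerivAt f (f' y) y)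
    (hf' : HasDerivAt f' f'' r) (h : f'' + f' r / r + V * f r = 0) : SolvesRadialAt f V r := by
  have hd : deriv f =ᶠ[𝓝 r] f' := hf.mono fun y hy => hy.deriv
  refine ⟨hf.self_of_nhds.differentiableAt, hd.differentiableAt_iff.2 hf'.differentiableAt, ?_⟩
  rwa [hd.deriv_eq, hf'.deriv, hd.eq_of_nhds]

theorem congr_of_eventuallyEq (hg : SolvesRadialAt g V r) (hfg : f =ᶠ[𝓝 r] g) :
    SolvesRadialAt f V r := by
  have hd := hfg.deriv
  refine ⟨hfg.differentiableAt_iff.2 hg.1, hd.differentiableAt_iff.2 hg.2.1, ?_⟩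
  rw [hd.deriv_eq, hd.eq_of_nhds, hfg.eq_of_nhds]
  exact hg.2.2

theorem comp_mul_div {a : ℝ} (hf : SolvesRadialAt f V (a * r)) (ha : a ≠ 0) (c : ℝ) :
    SolvesRadialAt (fun y => f (a * y) / c) (a ^ 2 * V) r := by
  have hd : ∀ (u : ℝ → ℝ) (d : ℝ),
      deriv (fun y => u (a * y) / d) = fun y => deriv u (a * y) / (d / a) := by
    intro u d
    funext y
    rw [deriv_div_const, deriv_comp_mul_left, smul_eq_mul, div_div_eq_mul_div, mul_comm]
  have hmul : DifferentiableAt ℝ (a * ·) r := differentiableAt_id.const_mul a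
  refine ⟨(hf.1.comp r hmul).div_const c, ?_, ?_⟩
  · rw [hd]
    exact (hf.2.1.comp r hmul).div_const _
  · have h := hf.2.2
    rw [hd, hd]
    field_simp at h ⊢
    linear_combination (a / c) * h

end SolvesRadialAt

theorem solvesRadialAt_besselJr (ℓ : ℕ) {x : ℝ} (hx : x ≠ 0) :
    SolvesRadialAt (besselJr ℓ) (1 - ℓ ^ 2 / x ^ 2) x := by
  have hJ := differentiable_besselJr
  have heq : deriv (besselJr ℓ) =ᶠ[𝓝 x] fun y => ℓ / y * besselJr ℓ y - besselJr (ℓ + 1) y :=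
    (eventually_ne_nhds hx).mono fun y hy => deriv_besselJr ℓ hy
  have hD := (((hasDerivAt_const x (ℓ : ℝ)).div (hasDerivAt_id x) hx).mul
    (hJ ℓ x).hasDerivAt).sub (hJ (ℓ + 1) x).hasDerivAt
  refine .of_hasDerivAt (.of_forall fun y => (hJ ℓ y).hasDerivAt)
    (hD.congr_of_eventuallyEq heq) ?_
  rw [deriv_besselJr_succ ℓ hx, deriv_besselJr ℓ hx]
  simp only [id_eq, Pi.div_apply]
  field_simp
  ring

theorem deriv_besselJr_comp_mul_div_of_besselJr_eq_zero {m : ℕ} {a ρ : ℝ} (ha : a ≠ 0)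
    (hρ : ρ ≠ 0) (hJm : besselJr m (a * ρ) = 0) (hJ : besselJr (m + 1) (a * ρ) ≠ 0) :
    deriv (fun r => besselJr (m + 1) (a * r) / besselJr (m + 1) (a * ρ)) ρ = -(m + 1) / ρ := by
  rw [deriv_div_const, deriv_comp_mul_left, smul_eq_mul, deriv_besselJr_succ m (mul_ne_zero ha hρ),
    hJm]
  field_simp
  ring

theorem hasDerivAt_div_pow (ρ : ℝ) (ℓ : ℕ) {r : ℝ} (hr : r ≠ 0) :
    HasDerivAt (fun y => (ρ / y) ^ ℓ) (-ℓ * (ρ / r) ^ ℓ / r) r := by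
  refine ((hasDerivAt_pow ℓ (ρ / r)).comp r
    ((hasDerivAt_const r ρ).div (hasDerivAt_id r) hr)).congr_deriv ?_
  cases ℓ with
  | zero => simp
  | succ n =>
    simp only [Nat.add_sub_cancel, pow_succ]
    field_simp
    ring

theorem solvesRadialAt_div_pow (ρ : ℝ) (ℓ : ℕ) {r : ℝ} (hr : r ≠ 0) :
    SolvesRadialAt (fun y => (ρ / y) ^ ℓ) (-ℓ ^ 2 / r ^ 2) r := by
  refine .of_hasDerivAt ((eventually_ne_nhds hr).mono fun y hy => hasDerivAt_div_pow ρ ℓ hy)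
    (((hasDerivAt_div_pow ρ ℓ hr).const_mul (-ℓ : ℝ)).div (hasDerivAt_id r) hr) ?_
  field_simp
  ring

theorem integrableOn_Ioi_div_pow_sq_mul {ρ : ℝ} (hρ : 0 < ρ) {ℓ : ℕ} (hℓ : 2 ≤ ℓ) :
    IntegrableOn (fun r => ((ρ / r) ^ ℓ) ^ 2 * r) (Ioi ρ) := by
  have hexp : (1 - 2 * ℓ : ℝ) < -1 := by
    have : (2 : ℝ) ≤ ℓ := by exact_mod_cast hℓ
    linarith
  refine IntegrableOn.congr_fun ((integrableOn_Ioi_rpow_of_lt hexp hρ).const_mul (ρ ^ (2 * ℓ)))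
    (fun r hr => ?_) measurableSet_Ioi
  have hr : 0 < r := hρ.trans hr
  rw [Real.rpow_sub hr, Real.rpow_one, show (2 * ℓ : ℝ) = (2 * ℓ : ℕ) by push_cast; ring,
    Real.rpow_natCast, ← pow_mul, mul_comm ℓ 2, div_pow]
  field_simp

theorem integrableOn_Ioi_sq_mul_of_eqOn {f g : ℝ → ℝ} {ρ : ℝ} (hρ : 0 < ρ) {ℓ : ℕ} (hℓ : 2 ≤ ℓ)
    (hg : Continuous g) (hfg : EqOn f g (Ioc 0 ρ)) (hfh : EqOn f (fun r => (ρ / r) ^ ℓ) (Ioi ρ)) :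
    IntegrableOn (fun r => f r ^ 2 * r) (Ioi 0) := by
  rw [← Ioc_union_Ioi_eq_Ioi hρ.le]
  refine IntegrableOn.union ?_ ?_
  · exact (by fun_prop : Continuous fun r => g r ^ 2 * r).integrableOn_Ioc.congr_fun
      (fun r hr => by rw [hfg hr]) measurableSet_Ioc
  · exact (integrableOn_Ioi_div_pow_sq_mul hρ hℓ).congr_fun (fun r hr => by rw [hfh hr])
      measurableSet_Ioi

theorem HasDerivAt.of_eventuallyEq_Iic_Ici {f g h : ℝ → ℝ} {ρ d : ℝ} (hg : HasDerivAt g d ρ)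
    (hh : HasDerivAt h d ρ) (hfg : f =ᶠ[𝓝[≤] ρ] g) (hfh : f =ᶠ[𝓝[≥] ρ] h) :
    HasDerivAt f d ρ := by
  have := (hg.hasDerivWithinAt.congr_of_eventuallyEq hfg (hfg.eq_of_nhdsWithin self_mem_Iic)).union
    (hh.hasDerivWithinAt.congr_of_eventuallyEq hfh (hfh.eq_of_nhdsWithin self_mem_Ici))
  rwa [Iic_union_Ici, hasDerivWithinAt_univ] at this

theorem contDiffOn_one_of_differentiableAt_deriv {f : ℝ → ℝ} {s : Set ℝ} (hs : IsOpen s)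
    (hf : ∀ x ∈ s, DifferentiableAt ℝ f x) (hf' : ∀ x ∈ s, DifferentiableAt ℝ (deriv f) x) :
    ContDiffOn ℝ 1 f s := by
  rw [show (1 : WithTop ℕ∞) = 0 + 1 from rfl, contDiffOn_succ_iff_deriv_of_isOpen hs,
    contDiffOn_zero]
  exact ⟨fun x hx => (hf x hx).differentiableWithinAt, by simp,
    fun x hx => (hf' x hx).continuousAt.continuousWithinAt⟩

section Gluing

variable {f g h : ℝ → ℝ} {s : Set ℝ} {ρ : ℝ}

theorem hasDerivAt_of_eqOn_Iic_Ici (hs : IsOpen s) (hg : DifferentiableOn ℝ g s)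
    (hh : DifferentiableOn ℝ h s) (hfg : EqOn f g (Iic ρ ∩ s)) (hfh : EqOn f h (Ici ρ ∩ s))
    (hρ : deriv g ρ = deriv h ρ) {x : ℝ} (hx : x ∈ s) :
    HasDerivAt f (if x ≤ ρ then deriv g x else deriv h x) x := by
  have hgx := (hg.differentiableAt (hs.mem_nhds hx)).hasDerivAt
  have hhx := (hh.differentiableAt (hs.mem_nhds hx)).hasDerivAt
  rcases lt_trichotomy x ρ with hxρ | rfl | hxρ
  · rw [if_pos hxρ.le]
    exact hgx.congr_of_eventuallyEq <| eventuallyEq_of_mem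
      ((isOpen_Iio.inter hs).mem_nhds ⟨hxρ, hx⟩)
      (hfg.mono (inter_subset_inter_left _ Iio_subset_Iic_self))
  · rw [if_pos le_rfl]
    exact hgx.of_eventuallyEq_Iic_Ici (hρ ▸ hhx)
      (eventuallyEq_of_mem (inter_mem_nhdsWithin _ (hs.mem_nhds hx)) hfg)
      (eventuallyEq_of_mem (inter_mem_nhdsWithin _ (hs.mem_nhds hx)) hfh)
  · rw [if_neg hxρ.not_ge]
    exact hhx.congr_of_eventuallyEq <| eventuallyEq_of_mem
      ((isOpen_Ioi.inter hs).mem_nhds ⟨hxρ, hx⟩)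
      (hfh.mono (inter_subset_inter_left _ Ioi_subset_Ici_self))

theorem contDiffOn_one_of_eqOn_Iic_Ici (hs : IsOpen s) (hg : ContDiffOn ℝ 1 g s)
    (hh : ContDiffOn ℝ 1 h s) (hfg : EqOn f g (Iic ρ ∩ s)) (hfh : EqOn f h (Ici ρ ∩ s))
    (hρ : deriv g ρ = deriv h ρ) : ContDiffOn ℝ 1 f s := by
  have hf x (hx : x ∈ s) := hasDerivAt_of_eqOn_Iic_Ici hs (hg.differentiableOn one_ne_zero)
    (hh.differentiableOn one_ne_zero) hfg hfh hρ hx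
  rw [show (1 : WithTop ℕ∞) = 0 + 1 from rfl, contDiffOn_succ_iff_deriv_of_isOpen hs,
    contDiffOn_zero]
  refine ⟨fun x hx => (hf x hx).differentiableAt.differentiableWithinAt, by simp,
    ContinuousOn.congr ?_ fun x hx => (hf x hx).deriv⟩
  refine ContinuousOn.if (fun x hx => ?_) ((hg.continuousOn_deriv_of_isOpen hs le_rfl).mono
    inter_subset_left) ((hh.continuousOn_deriv_of_isOpen hs le_rfl).mono inter_subset_left)
  rw [show {a : ℝ | a ≤ ρ} = Iic ρ from rfl, frontier_Iic, mem_inter_iff, mem_singleton_iff] at hx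
  exact hx.2 ▸ hρ

end Gluing

/-- zero-energy eigenfunction of the circular well in the ℓ-th mode, ℓ ≥ 2. -/
theorem stmt_0 (ℓ : ℕ) (hℓ : 2 ≤ ℓ) (a ρ : ℝ) (ha : 0 < a) (hρ : 0 < ρ)
    (hJ1 : besselJr (ℓ-1) (a*ρ) = 0) (hJ2 : besselJr ℓ (a*ρ) ≠ 0)
    (f : ℝ → ℝ)
    (hfin : ∀ r : ℝ, 0 < r → r ≤ ρ → f r = besselJr ℓ (a*r) / besselJr ℓ (a*ρ))
    (hfout : ∀ r : ℝ, ρ < r → f r = (ρ/r)^ℓ) :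
    ContDiffOn ℝ 1 f (Set.Ioi 0) ∧
    (∀ r : ℝ, ((0 < r ∧ r < ρ) ∨ ρ < r) →
      DifferentiableAt ℝ f r ∧ DifferentiableAt ℝ (deriv f) r ∧
      deriv (deriv f) r + deriv f r / r
        + ((if r < ρ then a^2 else 0) - (ℓ:ℝ)^2 / r^2) * f r = 0) ∧
    MeasureTheory.IntegrableOn (fun r => (f r)^2 * r) (Set.Ioi 0) := by
  obtain ⟨m, rfl⟩ : ∃ m, ℓ = m + 1 := ⟨ℓ - 1, by omega⟩
  rw [Nat.add_sub_cancel] at hJ1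
  set g : ℝ → ℝ := fun r => besselJr (m + 1) (a * r) / besselJr (m + 1) (a * ρ)
  set h : ℝ → ℝ := fun r => (ρ / r) ^ (m + 1)
  have hg : ∀ r, 0 < r → SolvesRadialAt g (a ^ 2 - ((m + 1 : ℕ) : ℝ) ^ 2 / r ^ 2) r := by
    intro r hr
    convert (solvesRadialAt_besselJr (m + 1) (mul_pos ha hr).ne').comp_mul_div ha.ne' _ using 1
    field_simp
  have hh : ∀ r, 0 < r → SolvesRadialAt h (-((m + 1 : ℕ) : ℝ) ^ 2 / r ^ 2) r :=
    fun r hr => solvesRadialAt_div_pow ρ (m + 1) hr.ne'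
  have hfg : EqOn f g (Iic ρ ∩ Ioi 0) := fun r hr => hfin r hr.2 hr.1
  have hfh : EqOn f h (Ici ρ ∩ Ioi 0) := by
    rintro r ⟨hρr : ρ ≤ r, -⟩
    rcases hρr.eq_or_lt with rfl | hρr
    · simp [h, hfin ρ hρ le_rfl, div_self hJ2, div_self hρ.ne']
    · exact hfout r hρr
  have hmatch : deriv g ρ = deriv h ρ := by
    rw [deriv_besselJr_comp_mul_div_of_besselJr_eq_zero ha.ne' hρ.ne' hJ1 hJ2,
      (hasDerivAt_div_pow ρ _ hρ.ne').deriv, div_self hρ.ne', one_pow]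
    push_cast
    ring
  have hC {u : ℝ → ℝ} {V : ℝ → ℝ} (hu : ∀ r, 0 < r → SolvesRadialAt u (V r) r) :
      ContDiffOn ℝ 1 u (Ioi 0) := contDiffOn_one_of_differentiableAt_deriv isOpen_Ioi
    (fun r hr => (hu r hr).1) fun r hr => (hu r hr).2.1
  refine ⟨contDiffOn_one_of_eqOn_Iic_Ici isOpen_Ioi (hC hg) (hC hh) hfg hfh hmatch, ?_, ?_⟩
  · rintro r (⟨hr, hrρ⟩ | hρr)
    · rw [if_pos hrρ]
      exact (hg r hr).congr_of_eventuallyEq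
        (eventuallyEq_of_mem (Ioo_mem_nhds hr hrρ) fun y hy => hfin y hy.1 hy.2.le)
    · rw [if_neg hρr.not_gt, zero_sub, ← neg_div]
      exact (hh r (hρ.trans hρr)).congr_of_eventuallyEq
        (eventuallyEq_of_mem (Ioi_mem_nhds hρr) hfout)
  · exact integrableOn_Ioi_sq_mul_of_eqOn hρ hℓ
      (((differentiable_besselJr _).continuous.comp (continuous_const_mul a)).div_const _)
      (fun r hr => hfin r hr.1 hr.2) fun r hr => hfout r hr
end

section
/- Let a, ρ > 0 satisfy J_0(aρ) = 0 and J_1(aρ) ≠ 0. Define f : (0,∞) → ℝ by f(r) = J_1(ar)/J_1(aρ) for 0 < r ≤ ρ and f(r) = ρ/r for r > ρ. Then f is continuously differentiable on (0,∞); f is twice differentiable on (0,ρ) and on (ρ,∞), where it satisfies f″(r) + f′(r)/r + (a²·𝟙_{r<ρ} − 1/r²)·f(r) = 0; and r·f(r) → ρ as r → ∞, so f(r) = O(1/r) but f(r) is not O(1/r²). (Thus (r,θ) ↦ f(r)e^{iθ} is a p-resonant state at zero energy for −Δ − a²·𝟙_{|x|≤ρ} on ℝ².) -/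
open scoped Real Topology
open Filter Asymptotics

/-!
Differentiating the power series termwise gives `J₀' = -J₁` and `J₁'(x) = J₀(x) - J₁(x)/x`,
so `r ↦ J₁(a r)` solves Bessel's equation of order one with parameter `a`, while `ρ / r` solves
the free equation `f'' + f'/r - f/r² = 0`. The two pieces agree at `ρ`, and so do their
derivatives, exactly because `J₀(aρ) = 0`: the inner one is `(a J₀(aρ) - J₁(aρ)/ρ) / J₁(aρ) = -1/ρ`.
Since `r f(r) = ρ` for `r > ρ`, `f` is `O(1/r)`, and it is not `O(1/r²)` because `r · O(1/r²) → 0`.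
-/

open Set

open scoped Nat

noncomputable def besselCoeff (ℓ k : ℕ) : ℝ := (-1) ^ k / (k ! * (k + ℓ)! : ℝ)

theorem besselJr_eq_tsum (ℓ : ℕ) (x : ℝ) :
    besselJr ℓ x = ∑' k, besselCoeff ℓ k * (x / 2) ^ (2 * k + ℓ) := rfl

theorem abs_besselCoeff_le (ℓ k : ℕ) : |besselCoeff ℓ k| ≤ (k ! : ℝ)⁻¹ := by
  have h1 : (1 : ℝ) ≤ (k + ℓ)! := by exact_mod_cast (k + ℓ).factorial_pos
  rw [besselCoeff, abs_div, abs_pow, abs_neg, abs_one, one_pow, abs_of_pos (by positivity),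
    one_div]
  gcongr
  exact le_mul_of_one_le_right (by positivity) h1

theorem summable_pow_two_mul_add_div_factorial (c : ℝ) (ℓ : ℕ) :
    Summable fun k : ℕ => c ^ (2 * k + ℓ) / k ! := by
  refine ((Real.summable_pow_div_factorial (c ^ 2)).mul_left (c ^ ℓ)).congr fun k => ?_
  rw [pow_add, pow_mul]
  ring

theorem norm_besselTerm_le {ℓ k : ℕ} {y M : ℝ} (hy : |y / 2| ≤ M) :
    ‖besselCoeff ℓ k * (y / 2) ^ (2 * k + ℓ)‖ ≤ (2 * M) ^ (2 * k + ℓ) / k ! := by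
  have hM : 0 ≤ M := (abs_nonneg _).trans hy
  calc ‖besselCoeff ℓ k * (y / 2) ^ (2 * k + ℓ)‖
      = |besselCoeff ℓ k| * |y / 2| ^ (2 * k + ℓ) := by
        rw [norm_mul, norm_pow, Real.norm_eq_abs, Real.norm_eq_abs]
    _ ≤ (k ! : ℝ)⁻¹ * (2 * M) ^ (2 * k + ℓ) := by
        gcongr
        · exact abs_besselCoeff_le ℓ k
        · linarith
    _ = (2 * M) ^ (2 * k + ℓ) / k ! := inv_mul_eq_div _ _

theorem norm_besselDerivTerm_le {ℓ k : ℕ} {y M : ℝ} (hM : 1 ≤ M) (hy : |y / 2| ≤ M) :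
    ‖besselCoeff ℓ k * ((2 * k + ℓ : ℕ) * (y / 2) ^ (2 * k + ℓ - 1) / 2)‖
      ≤ (2 * M) ^ (2 * k + ℓ) / k ! := by
  set n := 2 * k + ℓ
  have hn : (n : ℝ) ≤ 2 ^ n := by exact_mod_cast n.lt_two_pow_self.le
  have hpow : |y / 2| ^ (n - 1) ≤ M ^ n :=
    (pow_le_pow_left₀ (abs_nonneg _) hy _).trans (pow_le_pow_right₀ hM (n.sub_le 1))
  calc ‖besselCoeff ℓ k * (n * (y / 2) ^ (n - 1) / 2)‖
      = |besselCoeff ℓ k| * (n * |y / 2| ^ (n - 1) / 2) := by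
        simp only [norm_mul, norm_div, norm_pow, Real.norm_eq_abs, Nat.abs_cast, abs_two, abs_div]
    _ ≤ (k ! : ℝ)⁻¹ * (2 ^ n * M ^ n) := by
        gcongr
        · exact abs_besselCoeff_le ℓ k
        · calc n * |y / 2| ^ (n - 1) / 2 ≤ n * |y / 2| ^ (n - 1) := half_le_self (by positivity)
            _ ≤ 2 ^ n * M ^ n := mul_le_mul hn hpow (by positivity) (by positivity)
    _ = (2 * M) ^ n / k ! := by rw [mul_pow, inv_mul_eq_div]

theorem summable_besselTerm (ℓ : ℕ) (x : ℝ) :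
    Summable fun k => besselCoeff ℓ k * (x / 2) ^ (2 * k + ℓ) :=
  .of_norm_bounded (summable_pow_two_mul_add_div_factorial _ ℓ) fun _ => norm_besselTerm_le le_rfl

theorem summable_besselDerivTerm (ℓ : ℕ) (x : ℝ) :
    Summable fun k => besselCoeff ℓ k * ((2 * k + ℓ : ℕ) * (x / 2) ^ (2 * k + ℓ - 1) / 2) :=
  .of_norm_bounded (summable_pow_two_mul_add_div_factorial _ ℓ) fun _ =>
    norm_besselDerivTerm_le (le_max_left 1 _) (le_max_right _ _)

theorem hasDerivAt_besselTerm (ℓ k : ℕ) (x : ℝ) :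
    HasDerivAt (fun y => besselCoeff ℓ k * (y / 2) ^ (2 * k + ℓ))
      (besselCoeff ℓ k * ((2 * k + ℓ : ℕ) * (x / 2) ^ (2 * k + ℓ - 1) / 2)) x := by
  refine ((((hasDerivAt_id' x).div_const 2).fun_pow (2 * k + ℓ)).const_mul
    (besselCoeff ℓ k)).congr_deriv ?_
  ring

theorem hasDerivAt_besselJr_tsum (ℓ : ℕ) (x : ℝ) :
    HasDerivAt (besselJr ℓ)
      (∑' k, besselCoeff ℓ k * ((2 * k + ℓ : ℕ) * (x / 2) ^ (2 * k + ℓ - 1) / 2)) x := by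
  set M := |x| + 1
  have hM : 1 ≤ M := le_add_of_nonneg_left (abs_nonneg x)
  have hx : x ∈ Metric.ball (0 : ℝ) M := by simp [M]
  have hball : ∀ y ∈ Metric.ball (0 : ℝ) M, |y / 2| ≤ M := fun y hy => by
    rw [mem_ball_zero_iff, Real.norm_eq_abs] at hy
    rw [abs_div, abs_two]
    linarith [abs_nonneg y]
  exact hasDerivAt_tsum_of_isPreconnected (summable_pow_two_mul_add_div_factorial (2 * M) ℓ)
    Metric.isOpen_ball (convex_ball 0 M).isPreconnected
    (fun k y _ => hasDerivAt_besselTerm ℓ k y)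
    (fun k y hy => norm_besselDerivTerm_le hM (hball y hy)) hx (summable_besselTerm ℓ x) hx

theorem hasDerivAt_besselJr_zero (x : ℝ) : HasDerivAt (besselJr 0) (-besselJr 1 x) x := by
  refine (hasDerivAt_besselJr_tsum 0 x).congr_deriv ?_
  rw [(summable_besselDerivTerm 0 x).tsum_eq_zero_add, besselJr_eq_tsum, ← tsum_neg]
  simp only [mul_zero, add_zero, Nat.cast_zero, zero_mul, zero_div, zero_add]
  refine tsum_congr fun k => ?_
  rw [show 2 * (k + 1) - 1 = 2 * k + 1 by omega, besselCoeff, besselCoeff]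
  push_cast [Nat.factorial_succ, pow_succ]
  field_simp

theorem hasDerivAt_besselJr_succ (ℓ : ℕ) {x : ℝ} (hx : x ≠ 0) :
    HasDerivAt (besselJr (ℓ + 1)) (besselJr ℓ x - (ℓ + 1) * besselJr (ℓ + 1) x / x) x := by
  refine (hasDerivAt_besselJr_tsum (ℓ + 1) x).congr_deriv ?_
  rw [besselJr_eq_tsum, besselJr_eq_tsum, ← tsum_mul_left, ← tsum_div_const,
    ← (summable_besselTerm ℓ x).tsum_sub (((summable_besselTerm (ℓ + 1) x).mul_left _).div_const x)]
  refine tsum_congr fun k => ?_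
  rw [show 2 * k + (ℓ + 1) - 1 = 2 * k + ℓ by omega, besselCoeff, besselCoeff,
    ← add_assoc, Nat.factorial_succ]
  push_cast [pow_succ]
  field_simp
  ring

theorem hasDerivAt_besselJr_one_comp_mul {a r : ℝ} (ha : a ≠ 0) (hr : r ≠ 0) :
    HasDerivAt (fun s => besselJr 1 (a * s))
      (a * besselJr 0 (a * r) - besselJr 1 (a * r) / r) r := by
  refine ((hasDerivAt_besselJr_succ 0 (mul_ne_zero ha hr)).comp r
    ((hasDerivAt_id' r).const_mul a)).congr_deriv ?_
  field_simp
  ring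

theorem hasDerivAt_besselJr_one_comp_mul_deriv {a r : ℝ} (ha : a ≠ 0) (hr : r ≠ 0) :
    HasDerivAt (fun s => a * besselJr 0 (a * s) - besselJr 1 (a * s) / s)
      (2 * besselJr 1 (a * r) / r ^ 2 - a * besselJr 0 (a * r) / r
        - a ^ 2 * besselJr 1 (a * r)) r := by
  have h0 :=
    ((hasDerivAt_besselJr_zero (a * r)).comp r ((hasDerivAt_id' r).const_mul a)).const_mul a
  have h1 := (hasDerivAt_besselJr_one_comp_mul ha hr).div (hasDerivAt_id' r) hr
  refine (h0.sub h1).congr_deriv ?_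
  field_simp
  ring

theorem hasDerivAt_const_div (c : ℝ) {r : ℝ} (hr : r ≠ 0) :
    HasDerivAt (fun s => c / s) (-(c / r ^ 2)) r :=
  ((hasDerivAt_const r c).div (hasDerivAt_id' r) hr).congr_deriv (by ring)

theorem HasDerivAt.of_eventuallyEq_left_right {F : Type*} [NormedAddCommGroup F] [NormedSpace ℝ F]
    {f g h : ℝ → F} {x : ℝ} {d : F} (hg : HasDerivAt g d x) (hh : HasDerivAt h d x)
    (hfg : f =ᶠ[𝓝[≤] x] g) (hfh : f =ᶠ[𝓝[≥] x] h) : HasDerivAt f d x := by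
  have hl := hg.hasDerivWithinAt.congr_of_eventuallyEq hfg (hfg.eq_of_nhdsWithin self_mem_Iic)
  have hr := hh.hasDerivWithinAt.congr_of_eventuallyEq hfh (hfh.eq_of_nhdsWithin self_mem_Ici)
  simpa only [Iic_union_Ici, hasDerivWithinAt_univ] using hl.union hr

theorem ContinuousAt.of_eventuallyEq_left_right {α β : Type*} [TopologicalSpace α] [LinearOrder α]
    [OrderTopology α] [TopologicalSpace β] {f g h : α → β} {x : α}
    (hg : ContinuousAt g x) (hh : ContinuousAt h x)
    (hfg : f =ᶠ[𝓝[≤] x] g) (hfh : f =ᶠ[𝓝[≥] x] h) : ContinuousAt f x :=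
  continuousAt_iff_continuous_left_right.2
    ⟨hg.continuousWithinAt.congr_of_eventuallyEq hfg (hfg.eq_of_nhdsWithin self_mem_Iic),
      hh.continuousWithinAt.congr_of_eventuallyEq hfh (hfh.eq_of_nhdsWithin self_mem_Ici)⟩

theorem contDiffOn_one_of_hasDerivAt {𝕜 F : Type*} [NontriviallyNormedField 𝕜]
    [NormedAddCommGroup F] [NormedSpace 𝕜 F] {f f' : 𝕜 → F} {s : Set 𝕜} (hs : IsOpen s)
    (hf : ∀ x ∈ s, HasDerivAt f (f' x) x) (hf' : ContinuousOn f' s) : ContDiffOn 𝕜 1 f s := by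
  rw [show (1 : WithTop ℕ∞) = 0 + 1 from rfl, contDiffOn_succ_iff_deriv_of_isOpen hs]
  refine ⟨fun x hx => (hf x hx).differentiableAt.differentiableWithinAt, by simp, ?_⟩
  rw [contDiffOn_zero]
  exact hf'.congr fun x hx => (hf x hx).deriv

theorem hasDerivAt_deriv_of_eventually {𝕜 F : Type*} [NontriviallyNormedField 𝕜]
    [NormedAddCommGroup F] [NormedSpace 𝕜 F] {f f' : 𝕜 → F} {f'' : F} {x : 𝕜}
    (hf' : HasDerivAt f' f'' x) (hf : ∀ᶠ y in 𝓝 x, HasDerivAt f (f' y) y) :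
    HasDerivAt (deriv f) f'' x :=
  hf'.congr_of_eventuallyEq (hf.mono fun _ h => h.deriv)

theorem isBigO_inv_of_tendsto_mul {f : ℝ → ℝ} {c : ℝ} (hf : Tendsto (fun r => r * f r) atTop (𝓝 c)) :
    f =O[atTop] fun r => 1 / r := by
  have h := hf.isBigO_one ℝ |>.mul (isBigO_refl (fun r : ℝ => 1 / r) atTop)
  refine (h.congr' ?_ ?_)
  · filter_upwards [eventually_ne_atTop 0] with r hr
    field_simp
  · simp

theorem not_isBigO_inv_sq_of_tendsto_mul {f : ℝ → ℝ} {c : ℝ} (hc : c ≠ 0)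
    (hf : Tendsto (fun r => r * f r) atTop (𝓝 c)) : ¬ f =O[atTop] fun r => 1 / r ^ 2 := by
  intro h
  have hO := (isBigO_refl (fun r : ℝ => r) atTop).mul h
  have h0 : Tendsto (fun r : ℝ => r * (1 / r ^ 2)) atTop (𝓝 0) := by
    refine tendsto_inv_atTop_zero.congr' ?_
    filter_upwards [eventually_ne_atTop 0] with r hr
    field_simp
  exact hc (tendsto_nhds_unique hf (hO.trans_tendsto h0))

noncomputable def resonanceDeriv (a ρ r : ℝ) : ℝ :=
  if r ≤ ρ then (a * besselJr 0 (a * r) - besselJr 1 (a * r) / r) / besselJr 1 (a * ρ)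
  else -(ρ / r ^ 2)

theorem resonanceDeriv_eqOn_Ici {a ρ : ℝ} (hρ : ρ ≠ 0) (hJ0 : besselJr 0 (a * ρ) = 0)
    (hJ1 : besselJr 1 (a * ρ) ≠ 0) :
    EqOn (resonanceDeriv a ρ) (fun r => -(ρ / r ^ 2)) (Ici ρ) := by
  intro r hr
  rcases (mem_Ici.1 hr).eq_or_lt with rfl | hlt
  · rw [resonanceDeriv, if_pos le_rfl, hJ0]
    field_simp
    ring
  · exact if_neg hlt.not_ge

theorem hasDerivAt_resonanceDeriv {a ρ r : ℝ} {f : ℝ → ℝ} (ha : a ≠ 0) (hρ : 0 < ρ)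
    (hJ0 : besselJr 0 (a * ρ) = 0) (hJ1 : besselJr 1 (a * ρ) ≠ 0)
    (hin : EqOn f (fun s => besselJr 1 (a * s) / besselJr 1 (a * ρ)) (Ioc 0 ρ))
    (hout : EqOn f (fun s => ρ / s) (Ici ρ)) (hr : 0 < r) :
    HasDerivAt f (resonanceDeriv a ρ r) r := by
  have hinner := (hasDerivAt_besselJr_one_comp_mul ha hr.ne').div_const (besselJr 1 (a * ρ))
  have houter := hasDerivAt_const_div ρ hr.ne'
  rcases lt_trichotomy r ρ with hlt | rfl | hgt
  · rw [resonanceDeriv, if_pos hlt.le]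
    exact hinner.congr_of_eventuallyEq (hin.eventuallyEq_of_mem (Ioc_mem_nhds hr hlt))
  · refine HasDerivAt.of_eventuallyEq_left_right ?_ ?_
      (hin.eventuallyEq_of_mem (Ioc_mem_nhdsLE hr)) (hout.eventuallyEq_of_mem self_mem_nhdsWithin)
    · rwa [resonanceDeriv, if_pos le_rfl]
    · rwa [resonanceDeriv_eqOn_Ici hr.ne' hJ0 hJ1 self_mem_Ici]
  · rw [resonanceDeriv_eqOn_Ici hρ.ne' hJ0 hJ1 hgt.le]
    exact houter.congr_of_eventuallyEq (hout.eventuallyEq_of_mem (Ici_mem_nhds hgt))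

theorem continuousOn_resonanceDeriv {a ρ : ℝ} (ha : a ≠ 0) (hρ : 0 < ρ)
    (hJ0 : besselJr 0 (a * ρ) = 0) (hJ1 : besselJr 1 (a * ρ) ≠ 0) :
    ContinuousOn (resonanceDeriv a ρ) (Ioi 0) := by
  intro r (hr : 0 < r)
  refine ContinuousAt.continuousWithinAt ?_
  have hinner := ((hasDerivAt_besselJr_one_comp_mul_deriv ha hr.ne').div_const
    (besselJr 1 (a * ρ))).continuousAt
  have houter : ContinuousAt (fun s : ℝ => -(ρ / s ^ 2)) r := by fun_prop (disch := positivity)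
  have hIic : EqOn (resonanceDeriv a ρ)
      (fun s => (a * besselJr 0 (a * s) - besselJr 1 (a * s) / s) / besselJr 1 (a * ρ)) (Iic ρ) :=
    fun s hs => if_pos hs
  have hIci := resonanceDeriv_eqOn_Ici hρ.ne' hJ0 hJ1
  rcases lt_trichotomy r ρ with hlt | rfl | hgt
  · exact hinner.congr (hIic.eventuallyEq_of_mem (Iic_mem_nhds hlt)).symm
  · exact hinner.of_eventuallyEq_left_right houter
      (hIic.eventuallyEq_of_mem self_mem_nhdsWithin) (hIci.eventuallyEq_of_mem self_mem_nhdsWithin)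
  · exact houter.congr (hIci.eventuallyEq_of_mem (Ici_mem_nhds hgt)).symm

theorem resonanceProfile_ode {a ρ r : ℝ} {f : ℝ → ℝ} (ha : a ≠ 0) (hρ : 0 < ρ)
    (hJ0 : besselJr 0 (a * ρ) = 0) (hJ1 : besselJr 1 (a * ρ) ≠ 0)
    (hin : EqOn f (fun s => besselJr 1 (a * s) / besselJr 1 (a * ρ)) (Ioc 0 ρ))
    (hout : EqOn f (fun s => ρ / s) (Ici ρ)) (hr : (0 < r ∧ r < ρ) ∨ ρ < r) :
    DifferentiableAt ℝ f r ∧ DifferentiableAt ℝ (deriv f) r ∧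
      deriv (deriv f) r + deriv f r / r + ((if r < ρ then a ^ 2 else 0) - 1 / r ^ 2) * f r = 0 := by
  have hf := fun s (hs : 0 < s) => hasDerivAt_resonanceDeriv ha hρ hJ0 hJ1 hin hout hs
  rcases hr with ⟨hr, hlt⟩ | hgt
  · have hev : ∀ᶠ s in 𝓝 r, HasDerivAt f
        ((a * besselJr 0 (a * s) - besselJr 1 (a * s) / s) / besselJr 1 (a * ρ)) s := by
      filter_upwards [Ioo_mem_nhds hr hlt] with s hs
      simpa only [resonanceDeriv, if_pos hs.2.le] using hf s hs.1
    have h2 := hasDerivAt_deriv_of_eventually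
      ((hasDerivAt_besselJr_one_comp_mul_deriv ha hr.ne').div_const (besselJr 1 (a * ρ))) hev
    refine ⟨(hf r hr).differentiableAt, h2.differentiableAt, ?_⟩
    rw [h2.deriv, hev.self_of_nhds.deriv, if_pos hlt, hin ⟨hr, hlt.le⟩]
    field_simp
    ring
  · have hr : 0 < r := hρ.trans hgt
    have hev : ∀ᶠ s in 𝓝 r, HasDerivAt f (-(ρ / s ^ 2)) s := by
      filter_upwards [lt_mem_nhds hgt] with s hs
      simpa only [resonanceDeriv, if_neg (not_le.2 hs)] using hf s (hρ.trans hs)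
    have h2 := hasDerivAt_deriv_of_eventually (((hasDerivAt_const r ρ).div
      ((hasDerivAt_id' r).fun_pow 2) (pow_ne_zero 2 hr.ne')).neg) hev
    refine ⟨(hf r hr).differentiableAt, h2.differentiableAt, ?_⟩
    rw [h2.deriv, hev.self_of_nhds.deriv, if_neg (not_lt.2 hgt.le), hout hgt.le]
    field_simp
    ring

/-- p-resonant state at zero energy for the circular well. -/
theorem stmt_1 (a ρ : ℝ) (ha : 0 < a) (hρ : 0 < ρ)
    (hJ0 : besselJr 0 (a*ρ) = 0) (hJ1 : besselJr 1 (a*ρ) ≠ 0)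
    (f : ℝ → ℝ)
    (hfin : ∀ r : ℝ, 0 < r → r ≤ ρ → f r = besselJr 1 (a*r) / besselJr 1 (a*ρ))
    (hfout : ∀ r : ℝ, ρ < r → f r = ρ/r) :
    ContDiffOn ℝ 1 f (Set.Ioi 0) ∧
    (∀ r : ℝ, ((0 < r ∧ r < ρ) ∨ ρ < r) →
      DifferentiableAt ℝ f r ∧ DifferentiableAt ℝ (deriv f) r ∧
      deriv (deriv f) r + deriv f r / r
        + ((if r < ρ then a^2 else 0) - 1 / r^2) * f r = 0) ∧
    Filter.Tendsto (fun r => r * f r) Filter.atTop (nhds ρ) ∧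
    f =O[Filter.atTop] (fun r : ℝ => 1/r) ∧
    ¬ (f =O[Filter.atTop] (fun r : ℝ => 1/r^2)) := by
  have hin : EqOn f (fun r => besselJr 1 (a * r) / besselJr 1 (a * ρ)) (Ioc 0 ρ) :=
    fun r hr => hfin r hr.1 hr.2
  have hout : EqOn f (fun r => ρ / r) (Ici ρ) := by
    intro r hr
    rcases (mem_Ici.1 hr).eq_or_lt with rfl | hlt
    · rw [hfin _ hρ le_rfl, div_self hJ1]
      exact (div_self hρ.ne').symm
    · exact hfout r hlt
  have hlim : Tendsto (fun r => r * f r) atTop (𝓝 ρ) := by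
    refine tendsto_const_nhds.congr' ?_
    filter_upwards [eventually_gt_atTop ρ] with r hr
    rw [hfout r hr, mul_div_cancel₀ _ (hρ.trans hr).ne']
  refine ⟨contDiffOn_one_of_hasDerivAt isOpen_Ioi
      (fun r hr => hasDerivAt_resonanceDeriv ha.ne' hρ hJ0 hJ1 hin hout hr)
      (continuousOn_resonanceDeriv ha.ne' hρ hJ0 hJ1),
    fun r hr => resonanceProfile_ode ha.ne' hρ hJ0 hJ1 hin hout hr,
    hlim, isBigO_inv_of_tendsto_mul hlim, not_isBigO_inv_sq_of_tendsto_mul hρ.ne' hlim⟩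
end

section
/- Let ℓ ≥ 0 be an integer, ρ > 0 and a₀ > 0. Suppose (κ_k) is a sequence of positive reals with κ_k → 0, (a_k) is a sequence of positive reals with a_k → a₀, and Q_ℓ(iκ_k, a_k) = 0 for every k. Then J_{ℓ−1}(ρa₀) = 0 (interpreting J_{−1} = −J_1, so that for ℓ = 0 the conclusion reads J_1(ρa₀) = 0). -/
open scoped Real Topology
open Filter Asymptotics

/-! With `λ_k = iκ_k → 0` and `μ_k → a₀`, everything hinges on the behaviour of `H⁽¹⁾_m` at `0`:
`z^m H⁽¹⁾_m(z) → -i 2^m (m-1)!/π ≠ 0` for `m ≥ 1`, `z^(m+1) H⁽¹⁾_m(z) → 0` for all `m`, and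
`|H⁽¹⁾_0(z)| → ∞` because of the `log (z/2)` term. For `ℓ = n + 1`, multiplying `Q_ℓ = 0` by
`(λρ)^ℓ` leaves `μ J_n(ρμ)` times a nonzero limit on one side and a null sequence on the other.
For `ℓ = 0`, `Q_0 = 0` says that `μ J_1(ρμ) H⁽¹⁾_0(λρ)` stays bounded, which forces
`J_1(ρa₀) = 0`. -/

open Complex
open scoped Nat

theorem continuous_tsum_mul_half_pow {c : ℕ → ℂ} {C : ℝ} (hc : ∀ k, ‖c k‖ ≤ C / k !) (m : ℕ) :
    Continuous fun z : ℂ => ∑' k, c k * (z / 2) ^ (2 * k + m) := by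
  refine continuous_iff_continuousAt.2 fun z₀ => ?_
  set R := ‖z₀‖ + 1
  have hR : 0 < R := by positivity
  refine ContinuousOn.continuousAt (s := Metric.ball 0 R) ?_
    (Metric.isOpen_ball.mem_nhds (by simp [R]))
  refine continuousOn_tsum (u := fun k => C * (R / 2) ^ m * ((R / 2) ^ 2) ^ k / k !)
    (fun k => by fun_prop) ?_ fun k z hz => ?_
  · simpa only [mul_div_assoc] using (Real.summable_pow_div_factorial ((R / 2) ^ 2)).mul_left _
  · have hz : ‖z / 2‖ ≤ R / 2 := by
      rw [norm_div, Complex.norm_ofNat]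
      linarith [mem_ball_zero_iff.1 hz]
    calc ‖c k * (z / 2) ^ (2 * k + m)‖ ≤ C / k ! * (R / 2) ^ (2 * k + m) := by
          rw [norm_mul, norm_pow]
          gcongr
          · exact (norm_nonneg _).trans (hc k)
          · exact hc k
      _ = C * (R / 2) ^ m * ((R / 2) ^ 2) ^ k / k ! := by rw [pow_add, pow_mul]; ring

theorem norm_besselJn_coeff_le (m k : ℕ) :
    ‖(-1 : ℂ) ^ k / ((k ! : ℂ) * ((k + m)! : ℂ))‖ ≤ 1 / k ! := by
  rw [norm_div, norm_mul, norm_pow, norm_neg, norm_one, one_pow, Complex.norm_natCast,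
    Complex.norm_natCast]
  gcongr
  exact le_mul_of_one_le_right (Nat.cast_nonneg _) (mod_cast (k + m).factorial_pos)

theorem harm_le (m : ℕ) : harm m ≤ m := by
  calc harm m ≤ ∑ _j ∈ Finset.range m, (1 : ℝ) :=
        Finset.sum_le_sum fun j _ => div_le_one_of_le₀ (by simp) (by positivity)
    _ = m := by simp

theorem harm_nonneg (m : ℕ) : 0 ≤ harm m :=
  Finset.sum_nonneg fun _ _ => by positivity

theorem norm_besselYn_coeff_le (m k : ℕ) :
    ‖(-1 : ℂ) ^ k * ((harm k : ℝ) + (harm (k + m) : ℝ)) / ((k ! : ℂ) * ((k + m)! : ℂ))‖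
      ≤ 2 / k ! := by
  have hH : harm k + harm (k + m) ≤ 2 * (k + m)! := by
    have h1 := harm_le k
    have h2 := harm_le (k + m)
    have h3 : ((k + m : ℕ) : ℝ) ≤ (k + m)! := mod_cast Nat.self_le_factorial _
    push_cast at h2 h3
    linarith [(m.cast_nonneg : (0 : ℝ) ≤ m)]
  rw [norm_div, norm_mul, norm_pow, norm_neg, norm_one, one_pow, one_mul, ← ofReal_add,
    norm_real, Real.norm_of_nonneg (add_nonneg (harm_nonneg _) (harm_nonneg _)), norm_mul,
    Complex.norm_natCast, Complex.norm_natCast, div_le_div_iff₀ (by positivity) (by positivity)]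
  nlinarith [(k.factorial_pos : 0 < k !)]

theorem continuous_besselJn (m : ℕ) : Continuous (besselJn m) :=
  continuous_tsum_mul_half_pow (norm_besselJn_coeff_le m) m

theorem besselJn_zero_zero : besselJn 0 0 = 1 := by
  rw [besselJn, tsum_eq_single 0 fun k hk => by simp [hk]]
  simp

noncomputable def besselYnSeries (m : ℕ) (z : ℂ) : ℂ :=
  ∑' k : ℕ, ((-1 : ℂ) ^ k * ((harm k : ℝ) + (harm (k + m) : ℝ)) / ((k ! : ℂ) * ((k + m)! : ℂ)))
    * (z / 2) ^ (2 * k + m)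

theorem continuous_besselYnSeries (m : ℕ) : Continuous (besselYnSeries m) :=
  continuous_tsum_mul_half_pow (norm_besselYn_coeff_le m) m

theorem besselYn_eq (m : ℕ) (z : ℂ) :
    besselYn m z = 2 / π * (log (z / 2) + eulerGamma) * besselJn m z
      - 1 / π * ∑ k ∈ Finset.range m, ((m - k - 1)! / k ! : ℂ) * (z / 2) ^ (2 * (k : ℤ) - m)
      - 1 / π * besselYnSeries m z :=
  rfl

theorem norm_log_le_abs_log_norm_add_pi (z : ℂ) : ‖log z‖ ≤ |Real.log ‖z‖| + π := by
  refine (norm_le_abs_re_add_abs_im _).trans ?_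
  rw [log_re, log_im]
  exact add_le_add_right (abs_arg_le_pi z) _

theorem tendsto_mul_log_half : Tendsto (fun z : ℂ => z * log (z / 2)) (𝓝 0) (𝓝 0) := by
  have hr : Tendsto (fun z : ℂ => ‖z / 2‖) (𝓝 0) (𝓝 0) := by
    simpa using ((continuous_id.div_const (2 : ℂ)).norm.tendsto 0)
  have hbound : Tendsto (fun z : ℂ => 2 * |‖z / 2‖ * Real.log ‖z / 2‖| + 2 * π * ‖z / 2‖)
      (𝓝 0) (𝓝 0) := by
    simpa using (((Real.continuous_mul_log.tendsto 0).comp hr).abs.const_mul 2).add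
      (hr.const_mul (2 * π))
  refine squeeze_zero_norm (fun z => ?_) hbound
  have hz : ‖z‖ = 2 * ‖z / 2‖ := by rw [norm_div, Complex.norm_ofNat]; ring
  rw [norm_mul, hz, abs_mul, abs_norm]
  nlinarith [norm_log_le_abs_log_norm_add_pi (z / 2), norm_nonneg (z / 2)]

theorem tendsto_norm_log_half_atTop :
    Tendsto (fun z : ℂ => ‖log (z / 2)‖) (𝓝[≠] 0) atTop := by
  have hr : Tendsto (fun z : ℂ => z / 2) (𝓝[≠] 0) (𝓝[≠] 0) :=
    tendsto_nhdsWithin_of_tendsto_nhds_of_eventually_within _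
      (by simpa using ((continuous_id.div_const (2 : ℂ)).tendsto 0).mono_left nhdsWithin_le_nhds)
      (eventually_mem_nhdsWithin.mono fun z hz => div_ne_zero hz two_ne_zero)
  have hlog := tendsto_abs_atBot_atTop.comp
    ((Real.tendsto_log_nhdsGT_zero.comp tendsto_norm_nhdsNE_zero).comp hr)
  refine tendsto_atTop_mono (fun z => ?_) hlog
  simpa [log_re] using abs_re_le_norm (log (z / 2))

theorem pow_mul_besselYn_eq {m : ℕ} (hm : m ≠ 0) {z : ℂ} (hz : z ≠ 0) :
    z ^ m * besselYn m z = 2 / π * (z * log (z / 2)) * z ^ (m - 1) * besselJn m z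
      + 2 * eulerGamma / π * z ^ m * besselJn m z
      - 2 ^ m / π * ∑ k ∈ Finset.range m, ((m - k - 1)! / k ! : ℂ) * (z / 2) ^ (2 * k)
      - 1 / π * z ^ m * besselYnSeries m z := by
  have hz2 : z / 2 ≠ 0 := div_ne_zero hz two_ne_zero
  have hpow : z ^ m = z * z ^ (m - 1) := by
    obtain ⟨n, rfl⟩ := Nat.exists_eq_succ_of_ne_zero hm
    rw [Nat.succ_sub_one, pow_succ']
  have hsing : ∀ k : ℕ, z ^ m * (z / 2) ^ (2 * (k : ℤ) - m) = 2 ^ m * (z / 2) ^ (2 * k) := by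
    intro k
    rw [show 2 * (k : ℤ) - m = ((2 * k : ℕ) : ℤ) - (m : ℕ) by push_cast; ring, zpow_sub₀ hz2,
      zpow_natCast, zpow_natCast, div_pow z 2 m]
    field_simp
  have hsum : z ^ m * ∑ k ∈ Finset.range m, ((m - k - 1)! / k ! : ℂ) * (z / 2) ^ (2 * (k : ℤ) - m)
      = 2 ^ m * ∑ k ∈ Finset.range m, ((m - k - 1)! / k ! : ℂ) * (z / 2) ^ (2 * k) := by
    simp_rw [Finset.mul_sum, mul_left_comm _ (((m - _ - 1)! / _ ! : ℂ)), hsing]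
  rw [besselYn_eq]
  linear_combination (2 / π * log (z / 2) * besselJn m z) * hpow - 1 / π * hsum

theorem tendsto_pow_mul_besselYn {m : ℕ} (hm : m ≠ 0) :
    Tendsto (fun z => z ^ m * besselYn m z) (𝓝[≠] 0) (𝓝 (-(2 ^ m * (m - 1)! / π))) := by
  set P : ℂ → ℂ := fun z => ∑ k ∈ Finset.range m, ((m - k - 1)! / k ! : ℂ) * (z / 2) ^ (2 * k)
  have hP : Continuous P := by fun_prop
  have hP0 : P 0 = (m - 1)! := by
    obtain ⟨n, rfl⟩ := Nat.exists_eq_succ_of_ne_zero hm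
    simp [P, Finset.sum_range_succ']
  have hz : Tendsto (fun z : ℂ => z) (𝓝 0) (𝓝 0) := tendsto_id
  have hJ := (continuous_besselJn m).tendsto 0
  have hlim := (((((tendsto_mul_log_half.const_mul (2 / π : ℂ)).mul (hz.pow (m - 1))).mul hJ).add
    (((hz.pow m).const_mul (2 * eulerGamma / π : ℂ)).mul hJ)).sub
    ((hP.tendsto 0).const_mul (2 ^ m / π : ℂ))).sub
    (((hz.pow m).const_mul (1 / π : ℂ)).mul ((continuous_besselYnSeries m).tendsto 0))
  rw [hP0] at hlim
  simp only [zero_pow hm, mul_zero, zero_mul, add_zero, zero_sub, sub_zero] at hlim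
  convert (hlim.mono_left nhdsWithin_le_nhds).congr' _ using 2
  · ring
  · filter_upwards [self_mem_nhdsWithin] with z hz
    exact (pow_mul_besselYn_eq hm hz).symm

theorem tendsto_mul_besselYn_zero : Tendsto (fun z => z * besselYn 0 z) (𝓝 0) (𝓝 0) := by
  have hz : Tendsto (fun z : ℂ => z) (𝓝 0) (𝓝 0) := tendsto_id
  have hJ := (continuous_besselJn 0).tendsto 0
  have hlim := (((tendsto_mul_log_half.const_mul (2 / π : ℂ)).mul hJ).add
    ((hz.const_mul (2 * eulerGamma / π : ℂ)).mul hJ)).sub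
    ((hz.const_mul (1 / π : ℂ)).mul ((continuous_besselYnSeries 0).tendsto 0))
  simp only [mul_zero, zero_mul, add_zero, sub_zero] at hlim
  refine hlim.congr fun z => ?_
  rw [besselYn_eq]
  simp only [Finset.range_zero, Finset.sum_empty]
  ring

theorem tendsto_pow_mul_hankelH1n {m : ℕ} (hm : m ≠ 0) :
    Tendsto (fun z => z ^ m * hankelH1n m z) (𝓝[≠] 0) (𝓝 (-(I * (2 ^ m * (m - 1)! / π)))) := by
  have hJ : Tendsto (fun z : ℂ => z ^ m * besselJn m z) (𝓝[≠] 0) (𝓝 0) := by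
    simpa [zero_pow hm] using
      (((continuous_pow m).tendsto 0).mul ((continuous_besselJn m).tendsto 0)).mono_left
        nhdsWithin_le_nhds
  simpa [hankelH1n, mul_add, mul_left_comm _ I] using
    hJ.add ((tendsto_pow_mul_besselYn hm).const_mul I)

theorem tendsto_pow_succ_mul_hankelH1n (m : ℕ) :
    Tendsto (fun z => z ^ (m + 1) * hankelH1n m z) (𝓝[≠] 0) (𝓝 0) := by
  rcases m with _ | n
  · have hJ := (continuous_id.mul (continuous_besselJn 0)).tendsto 0
    simpa [hankelH1n, mul_add, mul_left_comm _ I] using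
      (hJ.add (tendsto_mul_besselYn_zero.const_mul I)).mono_left nhdsWithin_le_nhds
  · have hz : Tendsto (fun z : ℂ => z) (𝓝[≠] 0) (𝓝 0) := nhdsWithin_le_nhds
    simpa [pow_succ' _ (n + 1), mul_assoc] using hz.mul (tendsto_pow_mul_hankelH1n n.succ_ne_zero)

theorem tendsto_norm_mul_add_atTop {α 𝕜 : Type*} [NormedDivisionRing 𝕜] {l : Filter α}
    {f g h : α → 𝕜} {c d : 𝕜} (hf : Tendsto (fun x => ‖f x‖) l atTop) (hg : Tendsto g l (𝓝 c))
    (hc : c ≠ 0) (hh : Tendsto h l (𝓝 d)) : Tendsto (fun x => ‖f x * g x + h x‖) l atTop := by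
  have hc' : 0 < ‖c‖ / 2 := half_pos (norm_pos_iff.2 hc)
  have hg' : ∀ᶠ x in l, ‖c‖ / 2 ≤ ‖g x‖ :=
    hg.norm.eventually (eventually_ge_nhds (half_lt_self (norm_pos_iff.2 hc)))
  have hh' : ∀ᶠ x in l, ‖h x‖ ≤ ‖d‖ + 1 := hh.norm.eventually (eventually_le_nhds (lt_add_one _))
  refine tendsto_atTop_mono' l ?_
    (tendsto_atTop_add_const_right l (-(‖d‖ + 1)) (hf.atTop_mul_const hc'))
  filter_upwards [hg', hh'] with x hgx hhx
  have := norm_sub_norm_le (f x * g x) (-h x)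
  rw [norm_neg, sub_neg_eq_add, norm_mul] at this
  nlinarith [norm_nonneg (f x)]

theorem hankelH1n_zero_eq (z : ℂ) :
    hankelH1n 0 z = log (z / 2) * (2 * I / π * besselJn 0 z)
      + ((1 + 2 * I * eulerGamma / π) * besselJn 0 z - I / π * besselYnSeries 0 z) := by
  rw [hankelH1n, besselYn_eq]
  simp only [Finset.range_zero, Finset.sum_empty]
  ring

theorem tendsto_norm_hankelH1n_zero_atTop :
    Tendsto (fun z => ‖hankelH1n 0 z‖) (𝓝[≠] 0) atTop := by
  have hJ := ((continuous_besselJn 0).tendsto 0).mono_left (nhdsWithin_le_nhds (s := {0}ᶜ))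
  have hT := ((continuous_besselYnSeries 0).tendsto 0).mono_left (nhdsWithin_le_nhds (s := {0}ᶜ))
  simp_rw [hankelH1n_zero_eq]
  refine tendsto_norm_mul_add_atTop tendsto_norm_log_half_atTop (hJ.const_mul _) ?_
    ((hJ.const_mul _).sub (hT.const_mul _))
  simp [besselJn_zero_zero, Real.pi_ne_zero]

theorem besselJZ_natCast (n : ℕ) : besselJZ n = besselJn n := by
  funext z
  simp [besselJZ]

theorem besselJZ_neg_one : besselJZ (-1) = -besselJn 1 := by
  funext z
  simp [besselJZ]

theorem hankelH1_natCast (n : ℕ) : hankelH1 n = hankelH1n n := by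
  funext z
  simp [hankelH1, hankelH1n, besselJZ, besselYZ]

theorem hankelH1_neg_one : hankelH1 (-1) = -hankelH1n 1 := by
  funext z
  simp [hankelH1, hankelH1n, besselJZ, besselYZ]
  ring

theorem qfun_natCast_succ (ρ : ℝ) (n : ℕ) (lam : ℂ) (a : ℝ) :
    Qfun ρ (n + 1 : ℕ) lam a
      = muC a lam * besselJn n (ρ * muC a lam) * hankelH1n (n + 1) (lam * ρ)
        - lam * besselJn (n + 1) (ρ * muC a lam) * hankelH1n n (lam * ρ) := by
  simp only [Qfun, ← besselJZ_natCast, ← hankelH1_natCast]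
  push_cast
  ring_nf

theorem qfun_zero (ρ : ℝ) (lam : ℂ) (a : ℝ) :
    Qfun ρ 0 lam a
      = lam * besselJn 0 (ρ * muC a lam) * hankelH1n 1 (lam * ρ)
        - muC a lam * besselJn 1 (ρ * muC a lam) * hankelH1n 0 (lam * ρ) := by
  rw [Qfun, zero_sub, besselJZ_neg_one, hankelH1_neg_one, ← Nat.cast_zero (R := ℤ),
    besselJZ_natCast, hankelH1_natCast]
  simp only [Pi.neg_apply]
  ring

theorem tendsto_muC {ι : Type*} {l : Filter ι} {a : ι → ℝ} {lam : ι → ℂ} {a₀ : ℝ} (ha₀ : 0 < a₀)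
    (ha : Tendsto a l (𝓝 a₀)) (hlam : Tendsto lam l (𝓝 0)) :
    Tendsto (fun i => muC (a i) (lam i)) l (𝓝 a₀) := by
  have hsq : Tendsto (fun i => lam i ^ 2 + (a i : ℂ) ^ 2) l (𝓝 ((a₀ : ℂ) ^ 2)) := by
    simpa using (hlam.pow 2).add (((continuous_ofReal.tendsto a₀).comp ha).pow 2)
  have hslit : (a₀ : ℂ) ^ 2 ∈ slitPlane := by
    rw [← ofReal_pow]
    exact ofReal_mem_slitPlane.2 (by positivity)
  have hlim := (continuousAt_cpow_const (b := 2⁻¹) hslit).tendsto.comp hsq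
  rw [sq_cpow_two_inv (by simpa using ha₀)] at hlim
  simpa only [muC, one_div, Function.comp_def] using hlim

theorem tendsto_mul_const_nhdsNE {ι : Type*} {l : Filter ι} {lam : ι → ℂ} {ρ : ℂ} (hρ : ρ ≠ 0)
    (hlam : Tendsto lam l (𝓝[≠] 0)) : Tendsto (fun i => lam i * ρ) l (𝓝[≠] 0) := by
  refine tendsto_nhdsWithin_of_tendsto_nhds_of_eventually_within _ ?_ ?_
  · simpa using (hlam.mono_right nhdsWithin_le_nhds).mul_const ρ
  · filter_upwards [hlam self_mem_nhdsWithin] with i hi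
    exact mul_ne_zero hi hρ

section Matching

variable {ι : Type*} {l : Filter ι} [l.NeBot] {ρ μ₀ : ℂ} {μ lam : ι → ℂ}

theorem besselJn_eq_zero_of_hankel_matching {n : ℕ} (hρ : ρ ≠ 0) (hμ₀ : μ₀ ≠ 0)
    (hμ : Tendsto μ l (𝓝 μ₀)) (hlam : Tendsto lam l (𝓝[≠] 0))
    (h : ∀ᶠ i in l, μ i * besselJn n (ρ * μ i) * hankelH1n (n + 1) (lam i * ρ)
      = lam i * besselJn (n + 1) (ρ * μ i) * hankelH1n n (lam i * ρ)) :
    besselJn n (ρ * μ₀) = 0 := by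
  have hw := tendsto_mul_const_nhdsNE hρ hlam
  have hJ : ∀ m, Tendsto (fun i => besselJn m (ρ * μ i)) l (𝓝 (besselJn m (ρ * μ₀))) :=
    fun m => ((continuous_besselJn m).tendsto _).comp (hμ.const_mul ρ)
  have hleft := (hμ.mul (hJ n)).mul
    ((tendsto_pow_mul_hankelH1n (m := n + 1) n.succ_ne_zero).comp hw)
  have hright := ((hlam.mono_right nhdsWithin_le_nhds).mul (hJ (n + 1))).mul
    ((tendsto_pow_succ_mul_hankelH1n n).comp hw)
  have hlim := tendsto_nhds_unique hleft <| hright.congr' <| h.mono fun i hi => by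
    simp only [Function.comp_apply]
    linear_combination (-(lam i * ρ) ^ (n + 1)) * hi
  have hc : I * (2 ^ (n + 1) * ((n + 1 - 1)! : ℂ) / π) ≠ 0 := by
    simp [Real.pi_ne_zero, Nat.factorial_ne_zero]
  simpa [hμ₀, hc, Nat.factorial_ne_zero] using hlim

theorem besselJn_one_eq_zero_of_hankel_matching (hρ : ρ ≠ 0) (hμ₀ : μ₀ ≠ 0)
    (hμ : Tendsto μ l (𝓝 μ₀)) (hlam : Tendsto lam l (𝓝[≠] 0))
    (h : ∀ᶠ i in l, μ i * besselJn 1 (ρ * μ i) * hankelH1n 0 (lam i * ρ)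
      = lam i * besselJn 0 (ρ * μ i) * hankelH1n 1 (lam i * ρ)) :
    besselJn 1 (ρ * μ₀) = 0 := by
  by_contra hJ₁
  have hw := tendsto_mul_const_nhdsNE hρ hlam
  have hJ : ∀ m, Tendsto (fun i => besselJn m (ρ * μ i)) l (𝓝 (besselJn m (ρ * μ₀))) :=
    fun m => ((continuous_besselJn m).tendsto _).comp (hμ.const_mul ρ)
  have hleft := tendsto_norm_mul_add_atTop (tendsto_norm_hankelH1n_zero_atTop.comp hw)
    (hμ.mul (hJ 1)) (mul_ne_zero hμ₀ hJ₁) (tendsto_const_nhds (x := (0 : ℂ)))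
  have hright := (((hJ 0).const_mul ρ⁻¹).mul ((tendsto_pow_mul_hankelH1n one_ne_zero).comp hw)).norm
  refine not_tendsto_atTop_of_tendsto_nhds (hright.congr' <| h.mono fun i hi => ?_) hleft
  simp only [Function.comp_apply, add_zero, pow_one]
  rw [mul_comm (hankelH1n 0 _), hi]
  congr 1
  field_simp

end Matching

theorem stmt_3_general (ℓ : ℕ) (ρ a₀ : ℝ) (hρ : 0 < ρ) (ha₀ : 0 < a₀)
    (κ : ℕ → ℝ) (a : ℕ → ℝ)
    (hκpos : ∀ k, 0 < κ k)
    (hκlim : Filter.Tendsto κ Filter.atTop (nhds 0))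
    (halim : Filter.Tendsto a Filter.atTop (nhds a₀))
    (hQ : ∀ k, Qfun ρ (ℓ : ℤ) (Complex.I * (κ k : ℂ)) (a k) = 0) :
    besselJZ ((ℓ : ℤ) - 1) ((ρ * a₀ : ℝ) : ℂ) = 0 := by
  have hlam : Tendsto (fun k => I * (κ k : ℂ)) atTop (𝓝[≠] 0) := by
    refine tendsto_nhdsWithin_of_tendsto_nhds_of_eventually_within _ ?_
      (Eventually.of_forall fun k => ?_)
    · simpa using ((continuous_ofReal.tendsto 0).comp hκlim).const_mul I
    · simpa using (hκpos k).ne'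
  have hμ := tendsto_muC ha₀ halim (hlam.mono_right nhdsWithin_le_nhds)
  have hρ' : (ρ : ℂ) ≠ 0 := ofReal_ne_zero.2 hρ.ne'
  have ha₀' : (a₀ : ℂ) ≠ 0 := ofReal_ne_zero.2 ha₀.ne'
  push_cast
  rcases ℓ with _ | n
  · rw [Nat.cast_zero, zero_sub, besselJZ_neg_one, Pi.neg_apply, neg_eq_zero]
    refine besselJn_one_eq_zero_of_hankel_matching hρ' ha₀' hμ hlam
      (Eventually.of_forall fun k => ?_)
    have hQk := hQ k
    rw [Nat.cast_zero, qfun_zero, sub_eq_zero] at hQk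
    exact hQk.symm
  · rw [Nat.cast_succ, add_sub_cancel_right, besselJZ_natCast]
    refine besselJn_eq_zero_of_hankel_matching hρ' ha₀' hμ hlam (Eventually.of_forall fun k => ?_)
    exact sub_eq_zero.1 ((qfun_natCast_succ ρ n _ (a k)).symm.trans (hQ k))

/-- if eigenvalues (zeros of `Q_ℓ` on the positive imaginary axis) approach `0`
as the well depth approaches `a₀`, then `J_{ℓ-1}(ρ a₀) = 0`. -/
theorem stmt_3 (ℓ : ℕ) (ρ a₀ : ℝ) (hρ : 0 < ρ) (ha₀ : 0 < a₀)
    (κ : ℕ → ℝ) (a : ℕ → ℝ)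
    (hκpos : ∀ k, 0 < κ k) (hapos : ∀ k, 0 < a k)
    (hκlim : Filter.Tendsto κ Filter.atTop (nhds 0))
    (halim : Filter.Tendsto a Filter.atTop (nhds a₀))
    (hQ : ∀ k, Qfun ρ (ℓ : ℤ) (Complex.I * (κ k : ℂ)) (a k) = 0) :
    besselJZ ((ℓ : ℤ) - 1) ((ρ * a₀ : ℝ) : ℂ) = 0 :=
  stmt_3_general ℓ ρ a₀ hρ ha₀ κ a hκpos hκlim halim hQ
end
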